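/- arXiv:2301.02400 — 4 statements merged into one kernel-verified Lean document; each statement's English description precedes it below -/
import Mathlib

section
/- Let p be a prime, m ≥ 1, and π a permutation of {1,…,m}. Define for x = (x_1,…,x_m) ∈ (Z/p)^m the generalized Boolean-type function f(x) = ∑_{e=1}^{m−1} x_{π(e)}·x_{π(e+1)} (values in Z/p). For distinct r, r' ∈ Z/p, the sequences a_r, a_{r'} of length p^m defined by a_r(γ) = ω_p^{f(γ) + r·γ_{π(1)}} (where γ = ∑ γ_k p^{k−1}, γ = (γ_1,…,γ_m)) satisfy C(a_r, a_{r'})(0) = 0, i.e., the sequences are orthogonal. -/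
open Complex Finset

theorem stmt7 (p : ℕ) (hp : p.Prime) (m : ℕ) (hm : 1 ≤ m)
    (π : Equiv.Perm (Fin m)) (r r' : ZMod p) (hrr' : r ≠ r') :
    letI : NeZero p := ⟨hp.ne_zero⟩
    let ω : ℂ := Complex.exp (2 * Real.pi * Complex.I / p)
    let f : (Fin m → ZMod p) → ZMod p := fun γ =>
      ∑ e : Fin (m - 1),
        γ (π (Fin.castLE (Nat.sub_le m 1) e)) * γ (π ⟨e.val + 1, by omega⟩)
    let a : ZMod p → (Fin m → ZMod p) → ℂ := fun t γ =>
      ω ^ ((f γ + t * γ (π ⟨0, by omega⟩)).val)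
    ∑ γ : Fin m → ZMod p, a r γ * starRingEnd ℂ (a r' γ) = 0 := by
  intro ω f a
  haveI : NeZero p := ⟨hp.ne_zero⟩
  haveI : Fact p.Prime := ⟨hp⟩
  have hp1 : 1 < p := hp.one_lt
  have hprim : IsPrimitiveRoot ω p := Complex.isPrimitiveRoot_exp p hp.ne_zero
  have hord : orderOf ω = p := hprim.eq_orderOf.symm
  have hω0 : ω ≠ 0 := Complex.exp_ne_zero _
  -- ω^(x.val) respects addition
  have hχadd : ∀ x y : ZMod p, ω ^ ((x + y).val) = ω ^ x.val * ω ^ y.val := by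
    intro x y
    have h := pow_mod_orderOf ω (x.val + y.val)
    rw [hord] at h
    rw [ZMod.val_add, h, pow_add]
  -- conj ω = ω⁻¹
  have hconj : starRingEnd ℂ ω = ω⁻¹ := by
    rw [← Complex.exp_conj, ← Complex.exp_neg]
    congr 1
    simp only [map_div₀, map_mul, map_ofNat, Complex.conj_I, Complex.conj_ofReal, map_natCast]
    ring
  set i0 : Fin m := π ⟨0, by omega⟩ with hi0
  set c : ZMod p := r - r' with hc
  have hcne : c ≠ 0 := sub_ne_zero.mpr hrr'
  -- pointwise simplification of the summand
  have hpt : ∀ γ : Fin m → ZMod p,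
      a r γ * starRingEnd ℂ (a r' γ) = ω ^ ((c * γ i0).val) := by
    intro γ
    have key : f γ + r * γ i0 = (f γ + r' * γ i0) + c * γ i0 := by ring
    have h2 : a r γ = a r' γ * ω ^ ((c * γ i0).val) := by
      show ω ^ ((f γ + r * γ i0).val) = _
      rw [key, hχadd]
    rw [h2]
    have h3 : starRingEnd ℂ (a r' γ) = (a r' γ)⁻¹ := by
      show starRingEnd ℂ (ω ^ _) = (ω ^ _)⁻¹
      rw [map_pow, hconj, inv_pow]
    rw [h3]
    have h4 : a r' γ ≠ 0 := pow_ne_zero _ hω0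
    field_simp
  rw [Finset.sum_congr rfl fun γ _ => hpt γ]
  -- split the sum via the coordinate at i0
  have hsplit : ∑ γ : Fin m → ZMod p, ω ^ ((c * γ i0).val)
      = ∑ q : ZMod p × ({ j // j ≠ i0 } → ZMod p), ω ^ ((c * q.1).val) := by
    refine Fintype.sum_equiv (Equiv.funSplitAt i0 (ZMod p)) _ _ ?_
    intro γ
    simp [Equiv.funSplitAt]
  rw [hsplit, Fintype.sum_prod_type]
  have hinner : ∑ x : ZMod p, ω ^ ((c * x).val) = 0 := by
    have hbij : ∑ x : ZMod p, ω ^ ((c * x).val) = ∑ y : ZMod p, ω ^ y.val := by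
      refine Fintype.sum_equiv (Equiv.mulLeft₀ c hcne) _ _ ?_
      intro x
      simp [Equiv.mulLeft₀]
    rw [hbij]
    have hrange : ∑ y : ZMod p, ω ^ y.val = ∑ i ∈ Finset.range p, ω ^ i := by
      refine Finset.sum_nbij' (fun y => y.val) (fun n => (n : ZMod p)) ?_ ?_ ?_ ?_ ?_
      · intro y _; exact Finset.mem_range.mpr (ZMod.val_lt y)
      · intro n _; exact Finset.mem_univ _
      · intro y _; exact ZMod.natCast_rightInverse y
      · intro n hn; exact ZMod.val_natCast_of_lt (Finset.mem_range.mp hn)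
      · intro y _; rfl
    rw [hrange]
    exact hprim.geom_sum_eq_zero hp1
  simp only [Finset.sum_const, nsmul_eq_mul]
  rw [← Finset.mul_sum, hinner, mul_zero]
end

section
/- Let {A^t : t ∈ T} be a 2D-CCC with parameters (α, α, m, n) (T of size α, each A^t a set of α arrays of size m × n). For positive integers r ≥ 1 and s ≥ 1, and for tuples c ∈ Z/r, d ∈ Z/s, define new arrays Ω^{c,d}_{t,θ} of size rm × sn by Ω^{c,d}_{t,θ}(γ + γ'·m, μ + μ'·n) = A^t_θ(γ,μ) · ω_r^{c·γ'} · ω_s^{d·μ'} for 0 ≤ γ < m, 0 ≤ γ' < r, 0 ≤ μ < n, 0 ≤ μ' < s, where r and s are primes. Then for all shifts (τ_1, τ_2) with |τ_1| < m, |τ_2| < n, and all (t,c,d) ≠ (t',c',d'), the sum ∑_θ C(Ω^{c,d}_{t,θ}, Ω^{c',d'}_{t',θ})(τ_1, τ_2) = 0; and the zero-shift autocorrelation sum equals α·m·n·r·s. In particular the family {Ω^{c,d}_t} forms an optimal 2D-(rsα, m × n)-ZCACS with α constituent arrays of size rm × sn. -/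
open Complex Finset

/-- 2D aperiodic cross-correlation at an integer shift `(τ1, τ2)`. -/
noncomputable def corr2 (l1 l2 : ℕ) (A B : ℕ → ℕ → ℂ) (τ1 τ2 : ℤ) : ℂ :=
  ∑ g ∈ Finset.range l1, ∑ i ∈ Finset.range l2,
    if 0 ≤ (g : ℤ) + τ1 ∧ (g : ℤ) + τ1 < l1 ∧ 0 ≤ (i : ℤ) + τ2 ∧ (i : ℤ) + τ2 < l2
    then A g i * starRingEnd ℂ (B ((g : ℤ) + τ1).toNat ((i : ℤ) + τ2).toNat)
    else 0

lemma sum_range_mul {M : Type*} [AddCommMonoid M] (a b : ℕ) (f : ℕ → M) :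
    ∑ g ∈ Finset.range (a * b), f g = ∑ x ∈ Finset.range a, ∑ y ∈ Finset.range b, f (x * b + y) := by
  induction a with
  | zero => simp
  | succ a ih =>
    rw [Nat.succ_mul, Finset.sum_range_add, ih, Finset.sum_range_succ]


def Ecar (τ : ℤ) (m : ℕ) (γ : ℕ) : ℤ :=
  if (γ : ℤ) + τ < 0 then -1 else if (m : ℤ) ≤ (γ : ℤ) + τ then 1 else 0

lemma Ecar_spec (τ : ℤ) (m : ℕ) (γ : ℕ) (hm : 0 < m) (hτ : |τ| < m) (hγ : γ < m) :
    (Ecar τ m γ = -1 ∨ Ecar τ m γ = 0 ∨ Ecar τ m γ = 1) ∧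
    0 ≤ (γ : ℤ) + τ - Ecar τ m γ * m ∧ (γ : ℤ) + τ - Ecar τ m γ * m < m := by
  rw [abs_lt] at hτ
  unfold Ecar
  split_ifs <;> omega

lemma cond_iff (m : ℕ) (hm : 0 < m) (τ : ℤ) (hτ : |τ| < m) (γ : ℕ) (hγ : γ < m)
    (ε : ℤ) (hε : ε = -1 ∨ ε = 0 ∨ ε = 1) :
    (0 ≤ (γ : ℤ) + (τ - ε * m) ∧ (γ : ℤ) + (τ - ε * m) < m) ↔ ε = Ecar τ m γ := by
  rw [abs_lt] at hτ
  unfold Ecar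
  rcases hε with rfl | rfl | rfl <;> split_ifs <;> constructor <;> intro h <;>
    first
      | omega
      | exact h.elim

lemma md (m γ γ' : ℕ) (hm : 0 < m) (hγ : γ < m) :
    (γ' * m + γ) % m = γ ∧ (γ' * m + γ) / m = γ' := by
  constructor
  · rw [Nat.mul_add_mod', Nat.mod_eq_of_lt hγ]
  · rw [add_comm, Nat.add_mul_div_right _ _ hm, Nat.div_eq_of_lt hγ, zero_add]

lemma dim1 (m r : ℕ) (hm : 0 < m) (τ : ℤ) (hτ : |τ| < m) (γ γ' : ℕ) (hγ : γ < m) (hγ' : γ' < r) :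
    ((0 ≤ ((γ' * m + γ : ℕ) : ℤ) + τ ∧ ((γ' * m + γ : ℕ) : ℤ) + τ < ((r * m : ℕ) : ℤ)) ↔
      (0 ≤ (γ' : ℤ) + Ecar τ m γ ∧ (γ' : ℤ) + Ecar τ m γ < r)) ∧
    (0 ≤ (γ' : ℤ) + Ecar τ m γ →
      ((((γ' * m + γ : ℕ) : ℤ) + τ).toNat % m = ((γ : ℤ) + (τ - Ecar τ m γ * m)).toNat ∧
       (((γ' * m + γ : ℕ) : ℤ) + τ).toNat / m = ((γ' : ℤ) + Ecar τ m γ).toNat)) := by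
  obtain ⟨hεmem, ha0, ha1⟩ := Ecar_spec τ m γ hm hτ hγ
  set ε := Ecar τ m γ with hε
  set a := (γ : ℤ) + τ - ε * m with ha
  have key : ((γ' * m + γ : ℕ) : ℤ) + τ = ((γ' : ℤ) + ε) * m + a := by
    rw [ha]; push_cast; ring
  have hm' : (0 : ℤ) < m := by exact_mod_cast hm
  constructor
  · rw [key]
    constructor
    · rintro ⟨h1, h2⟩
      push_cast at h2
      constructor
      · by_contra hcon
        push_neg at hcon
        have hle : ((γ' : ℤ) + ε) * m ≤ (-1) * m :=
          mul_le_mul_of_nonneg_right (by omega) (le_of_lt hm')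
        linarith
      · by_contra hcon
        push_neg at hcon
        have hle : (r : ℤ) * m ≤ ((γ' : ℤ) + ε) * m :=
          mul_le_mul_of_nonneg_right hcon (le_of_lt hm')
        linarith
    · rintro ⟨h1, h2⟩
      constructor
      · have := mul_nonneg h1 (le_of_lt hm')
        linarith
      · push_cast
        have hle : ((γ' : ℤ) + ε) * m ≤ ((r : ℤ) - 1) * m :=
          mul_le_mul_of_nonneg_right (by omega) (le_of_lt hm')
        linarith
  · intro h1
    have h5 : (a.toNat : ℤ) = a := Int.toNat_of_nonneg ha0
    have h6 : ((((γ' : ℤ) + ε).toNat : ℕ) : ℤ) = (γ' : ℤ) + ε := Int.toNat_of_nonneg h1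
    have hcastN : ((γ' * m + γ : ℕ) : ℤ) + τ = ((((γ' : ℤ) + ε).toNat * m + a.toNat : ℕ) : ℤ) := by
      rw [key]; push_cast; rw [h5, h6]
    have hN : (((γ' * m + γ : ℕ) : ℤ) + τ).toNat = ((γ' : ℤ) + ε).toNat * m + a.toNat := by
      rw [hcastN, Int.toNat_natCast]
    have haN : a.toNat < m := by omega
    have hval : (γ : ℤ) + (τ - ε * m) = a := by rw [ha]; ring
    constructor
    · rw [hN, Nat.mul_add_mod', Nat.mod_eq_of_lt haN, hval]
    · rw [hN, add_comm, Nat.add_mul_div_right _ _ hm, Nat.div_eq_of_lt haN, zero_add]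

lemma sum_rotate3 {ι κ π M : Type*} [AddCommMonoid M] (s : Finset ι) (t : Finset κ)
    (p : Finset π) (f : ι → κ → π → M) :
    (∑ a ∈ s, ∑ b ∈ t, ∑ c ∈ p, f a b c) = ∑ b ∈ t, ∑ c ∈ p, ∑ a ∈ s, f a b c := by
  rw [Finset.sum_comm]
  exact Finset.sum_congr rfl fun b _ => Finset.sum_comm

lemma sum_rotate3' {ι κ π M : Type*} [AddCommMonoid M] (s : Finset ι) (t : Finset κ)
    (p : Finset π) (f : ι → κ → π → M) :
    (∑ a ∈ s, ∑ b ∈ t, ∑ c ∈ p, f a b c) = ∑ c ∈ p, ∑ a ∈ s, ∑ b ∈ t, f a b c :=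
  (sum_rotate3 s t p f).trans (sum_rotate3 t p s _)

lemma sum_swap4 {ι κ π ρ M : Type*} [AddCommMonoid M] (s : Finset ι) (t : Finset κ)
    (p : Finset π) (q : Finset ρ) (f : ι → κ → π → ρ → M) :
    (∑ a ∈ s, ∑ b ∈ t, ∑ c ∈ p, ∑ d ∈ q, f a b c d) =
    ∑ b ∈ t, ∑ d ∈ q, ∑ a ∈ s, ∑ c ∈ p, f a b c d := by
  rw [Finset.sum_comm]
  exact Finset.sum_congr rfl fun b _ => sum_rotate3' s p q (fun a c d => f a b c d)

lemma sum_swap4' {ι κ π ρ M : Type*} [AddCommMonoid M] (s : Finset ι) (t : Finset κ)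
    (p : Finset π) (q : Finset ρ) (f : ι → κ → π → ρ → M) :
    (∑ a ∈ s, ∑ b ∈ t, ∑ c ∈ p, ∑ d ∈ q, f a b c d) =
    ∑ c ∈ p, ∑ d ∈ q, ∑ a ∈ s, ∑ b ∈ t, f a b c d := by
  rw [sum_rotate3 s t p, sum_rotate3 t p s]
  exact Finset.sum_congr rfl fun c _ => sum_rotate3' s t q _

lemma corr2_decomp (m n r s : ℕ) (hm : 0 < m) (hn : 0 < n)
    (P Q : ℕ → ℕ → ℂ) (u u' v v' : ℂ) (τ1 τ2 : ℤ) (hτ1 : |τ1| < m) (hτ2 : |τ2| < n) :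
    corr2 (r * m) (s * n)
      (fun g i => P (g % m) (i % n) * u ^ (g / m) * v ^ (i / n))
      (fun g i => Q (g % m) (i % n) * u' ^ (g / m) * v' ^ (i / n)) τ1 τ2 =
    ∑ ε1 ∈ ({-1, 0, 1} : Finset ℤ), ∑ ε2 ∈ ({-1, 0, 1} : Finset ℤ),
      ((∑ γ' ∈ Finset.range r, if 0 ≤ (γ' : ℤ) + ε1 ∧ (γ' : ℤ) + ε1 < r
          then u ^ γ' * (starRingEnd ℂ u') ^ ((γ' : ℤ) + ε1).toNat else 0) *
       (∑ μ' ∈ Finset.range s, if 0 ≤ (μ' : ℤ) + ε2 ∧ (μ' : ℤ) + ε2 < s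
          then v ^ μ' * (starRingEnd ℂ v') ^ ((μ' : ℤ) + ε2).toNat else 0)) *
      corr2 m n P Q (τ1 - ε1 * m) (τ2 - ε2 * n) := by
  trans (∑ γ ∈ Finset.range m, ∑ μ ∈ Finset.range n,
    ((∑ γ' ∈ Finset.range r, if 0 ≤ (γ' : ℤ) + Ecar τ1 m γ ∧ (γ' : ℤ) + Ecar τ1 m γ < r
        then u ^ γ' * (starRingEnd ℂ u') ^ ((γ' : ℤ) + Ecar τ1 m γ).toNat else 0) *
     (∑ μ' ∈ Finset.range s, if 0 ≤ (μ' : ℤ) + Ecar τ2 n μ ∧ (μ' : ℤ) + Ecar τ2 n μ < s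
        then v ^ μ' * (starRingEnd ℂ v') ^ ((μ' : ℤ) + Ecar τ2 n μ).toNat else 0)) *
    (P γ μ * starRingEnd ℂ
      (Q ((γ : ℤ) + (τ1 - Ecar τ1 m γ * m)).toNat (((μ : ℤ) + (τ2 - Ecar τ2 n μ * n)).toNat))))
  · -- LHS = M
    simp only [corr2, sum_range_mul]
    rw [sum_swap4]
    refine Finset.sum_congr rfl fun γ hγ => Finset.sum_congr rfl fun μ hμ => ?_
    simp only [Finset.mem_range] at hγ hμ
    rw [Finset.sum_mul_sum, Finset.sum_mul]
    refine Finset.sum_congr rfl fun γ' hγ' => ?_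
    rw [Finset.sum_mul]
    refine Finset.sum_congr rfl fun μ' hμ' => ?_
    simp only [Finset.mem_range] at hγ' hμ'
    obtain ⟨md1, dv1⟩ := md m γ γ' hm hγ
    obtain ⟨md2, dv2⟩ := md n μ μ' hn hμ
    obtain ⟨iff1, tn1⟩ := dim1 m r hm τ1 hτ1 γ γ' hγ hγ'
    obtain ⟨iff2, tn2⟩ := dim1 n s hn τ2 hτ2 μ μ' hμ hμ'
    by_cases h1 : 0 ≤ (γ' : ℤ) + Ecar τ1 m γ ∧ (γ' : ℤ) + Ecar τ1 m γ < r
    · by_cases h2 : 0 ≤ (μ' : ℤ) + Ecar τ2 n μ ∧ (μ' : ℤ) + Ecar τ2 n μ < s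
      · obtain ⟨e1m, e1d⟩ := tn1 h1.1
        obtain ⟨e2m, e2d⟩ := tn2 h2.1
        rw [if_pos, if_pos h1, if_pos h2]
        · rw [md1, md2, dv1, dv2, map_mul, map_mul, map_pow, map_pow, e1m, e1d, e2m, e2d]
          ring
        · obtain ⟨p1, p2⟩ := iff1.mpr h1
          obtain ⟨p3, p4⟩ := iff2.mpr h2
          exact ⟨p1, p2, p3, p4⟩
      · rw [if_neg, if_neg h2]
        · simp
        · rintro ⟨c1, c2, c3, c4⟩
          exact h2 (iff2.mp ⟨c3, c4⟩)
    · rw [if_neg, if_neg h1]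
      · simp
      · rintro ⟨c1, c2, c3, c4⟩
        exact h1 (iff1.mp ⟨c1, c2⟩)
  · -- M = RHS
    symm
    simp only [corr2]
    have step1 : ∀ ε1 ∈ ({-1, 0, 1} : Finset ℤ), ∀ ε2 ∈ ({-1, 0, 1} : Finset ℤ),
        ((∑ γ' ∈ Finset.range r, if 0 ≤ (γ' : ℤ) + ε1 ∧ (γ' : ℤ) + ε1 < r
            then u ^ γ' * (starRingEnd ℂ u') ^ ((γ' : ℤ) + ε1).toNat else 0) *
         (∑ μ' ∈ Finset.range s, if 0 ≤ (μ' : ℤ) + ε2 ∧ (μ' : ℤ) + ε2 < s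
            then v ^ μ' * (starRingEnd ℂ v') ^ ((μ' : ℤ) + ε2).toNat else 0)) *
        (∑ γ ∈ Finset.range m, ∑ μ ∈ Finset.range n,
          if 0 ≤ (γ : ℤ) + (τ1 - ε1 * m) ∧ (γ : ℤ) + (τ1 - ε1 * m) < m ∧
             0 ≤ (μ : ℤ) + (τ2 - ε2 * n) ∧ (μ : ℤ) + (τ2 - ε2 * n) < n
          then P γ μ * starRingEnd ℂ
            (Q ((γ : ℤ) + (τ1 - ε1 * m)).toNat (((μ : ℤ) + (τ2 - ε2 * n)).toNat))
          else 0) =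
        ∑ γ ∈ Finset.range m, ∑ μ ∈ Finset.range n,
          (if ε1 = Ecar τ1 m γ ∧ ε2 = Ecar τ2 n μ then
            ((∑ γ' ∈ Finset.range r, if 0 ≤ (γ' : ℤ) + ε1 ∧ (γ' : ℤ) + ε1 < r
                then u ^ γ' * (starRingEnd ℂ u') ^ ((γ' : ℤ) + ε1).toNat else 0) *
             (∑ μ' ∈ Finset.range s, if 0 ≤ (μ' : ℤ) + ε2 ∧ (μ' : ℤ) + ε2 < s
                then v ^ μ' * (starRingEnd ℂ v') ^ ((μ' : ℤ) + ε2).toNat else 0)) *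
            (P γ μ * starRingEnd ℂ
              (Q ((γ : ℤ) + (τ1 - ε1 * m)).toNat (((μ : ℤ) + (τ2 - ε2 * n)).toNat)))
          else 0) := by
      intro ε1 hε1 ε2 hε2
      simp only [Finset.mem_insert, Finset.mem_singleton] at hε1 hε2
      rw [Finset.mul_sum]
      refine Finset.sum_congr rfl fun γ hγ => ?_
      rw [Finset.mul_sum]
      refine Finset.sum_congr rfl fun μ hμ => ?_
      simp only [Finset.mem_range] at hγ hμ
      by_cases hc : ε1 = Ecar τ1 m γ ∧ ε2 = Ecar τ2 n μ
      · rw [if_pos, if_pos hc]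
        obtain ⟨q1, q2⟩ := (cond_iff m hm τ1 hτ1 γ hγ ε1 hε1).mpr hc.1
        obtain ⟨q3, q4⟩ := (cond_iff n hn τ2 hτ2 μ hμ ε2 hε2).mpr hc.2
        exact ⟨q1, q2, q3, q4⟩
      · rw [if_neg, if_neg hc, mul_zero]
        rintro ⟨c1, c2, c3, c4⟩
        exact hc ⟨(cond_iff m hm τ1 hτ1 γ hγ ε1 hε1).mp ⟨c1, c2⟩,
          (cond_iff n hn τ2 hτ2 μ hμ ε2 hε2).mp ⟨c3, c4⟩⟩
    rw [Finset.sum_congr rfl fun ε1 hε1 => Finset.sum_congr rfl fun ε2 hε2 =>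
      step1 ε1 hε1 ε2 hε2]
    rw [sum_swap4']
    refine Finset.sum_congr rfl fun γ hγ => Finset.sum_congr rfl fun μ hμ => ?_
    simp only [Finset.mem_range] at hγ hμ
    have m1 : Ecar τ1 m γ ∈ ({-1, 0, 1} : Finset ℤ) := by
      have := (Ecar_spec τ1 m γ hm hτ1 hγ).1
      simp only [Finset.mem_insert, Finset.mem_singleton]
      tauto
    have m2 : Ecar τ2 n μ ∈ ({-1, 0, 1} : Finset ℤ) := by
      have := (Ecar_spec τ2 n μ hn hτ2 hμ).1
      simp only [Finset.mem_insert, Finset.mem_singleton]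
      tauto
    simp only [ite_and]
    rw [Finset.sum_comm]
    simp only [Finset.sum_ite_eq', m1, m2, if_true]
lemma geom_lemma (r : ℕ) (hr : r ≠ 0) (c c' : ℕ) (hc : c < r) (hc' : c' < r) :
    ∑ k ∈ Finset.range r, (Complex.exp (2 * Real.pi * Complex.I / r)) ^ (c * k) *
      starRingEnd ℂ ((Complex.exp (2 * Real.pi * Complex.I / r)) ^ (c' * k)) =
    if c = c' then (r : ℂ) else 0 := by
  set ω := Complex.exp (2 * Real.pi * Complex.I / r) with hω
  have hprim : IsPrimitiveRoot ω r := Complex.isPrimitiveRoot_exp r hr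
  have hω0 : ω ≠ 0 := Complex.exp_ne_zero _
  have hconj : starRingEnd ℂ ω = ω⁻¹ := by
    rw [hω, ← Complex.exp_conj, ← Complex.exp_neg]
    congr 1
    simp [map_div₀, map_mul, Complex.conj_I, Complex.conj_ofReal, map_ofNat]
    ring
  have hterm : ∀ k ∈ Finset.range r, ω ^ (c * k) * starRingEnd ℂ (ω ^ (c' * k))
      = (ω ^ ((c:ℤ) - c')) ^ k := by
    intro k _
    rw [map_pow, hconj]
    calc ω ^ (c * k) * (ω⁻¹) ^ (c' * k)
        = ω ^ ((c * k : ℕ) : ℤ) * ω ^ (-((c' * k : ℕ) : ℤ)) := by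
          rw [zpow_natCast, zpow_neg, zpow_natCast, inv_pow]
      _ = ω ^ (((c:ℤ) - c') * k) := by rw [← zpow_add₀ hω0]; congr 1; push_cast; ring
      _ = (ω ^ ((c:ℤ) - c')) ^ k := by rw [← zpow_natCast (ω ^ ((c:ℤ) - c')) k, ← zpow_mul]
  rw [Finset.sum_congr rfl hterm]
  by_cases hcc : c = c'
  · subst hcc
    simp [sub_self, zpow_zero, one_pow]
  · rw [if_neg hcc]
    have hζr : (ω ^ ((c:ℤ) - c')) ^ r = 1 := by
      rw [← zpow_natCast (ω ^ ((c:ℤ) - c')) r, ← zpow_mul, mul_comm, zpow_mul,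
        zpow_natCast, hprim.pow_eq_one, one_zpow]
    have hζ1 : ω ^ ((c:ℤ) - c') ≠ 1 := by
      intro h1
      have hdvd := (hprim.zpow_eq_one_iff_dvd _).mp h1
      rcases hdvd with ⟨k, hk⟩
      have habs : |(c:ℤ) - c'| < r := by
        rw [abs_lt]; constructor <;> omega
      rw [hk, abs_mul] at habs
      have habsr : |(r:ℤ)| = r := abs_of_nonneg (by exact_mod_cast Nat.zero_le r)
      rw [habsr] at habs
      have hk0 : k ≠ 0 := by rintro rfl; simp at hk; omega
      have hk1 : 1 ≤ |k| := by
        rcases hk0.lt_or_gt with h | h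
        · rw [abs_of_neg h]; omega
        · rw [abs_of_pos h]; omega
      have hrr : (0:ℤ) < r := by exact_mod_cast Nat.pos_of_ne_zero hr
      nlinarith [habs, hk1, hrr]
    rw [geom_sum_eq hζ1, hζr, sub_self, zero_div]

lemma corr2_zero_of_big (l1 l2 : ℕ) (A B : ℕ → ℕ → ℂ) (τ1 τ2 : ℤ)
    (h : (l1 : ℤ) ≤ |τ1| ∨ (l2 : ℤ) ≤ |τ2|) :
    corr2 l1 l2 A B τ1 τ2 = 0 := by
  apply Finset.sum_eq_zero
  intro g hg
  apply Finset.sum_eq_zero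
  intro i hi
  rw [if_neg]
  simp only [Finset.mem_range] at hg hi
  rcases h with h | h <;> rw [le_abs] at h <;> rcases h with h | h <;> omega


set_option maxHeartbeats 1000000 in
theorem stmt10 (α m n : ℕ) (hα : 0 < α) (hm : 0 < m) (hn : 0 < n)
    (A : Fin α → Fin α → ℕ → ℕ → ℂ)
    (hCCC : ∀ (t t' : Fin α) (τ1 τ2 : ℤ), |τ1| < m → |τ2| < n →
      ∑ θ : Fin α, corr2 m n (A t θ) (A t' θ) τ1 τ2 =
        if τ1 = 0 ∧ τ2 = 0 ∧ t = t' then ((α : ℂ) * m * n) else 0)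
    (r s : ℕ) (hr : r.Prime) (hs : s.Prime) :
    let ωr : ℂ := Complex.exp (2 * Real.pi * Complex.I / r)
    let ωs : ℂ := Complex.exp (2 * Real.pi * Complex.I / s)
    let Ω : Fin α → Fin α → ℕ → ℕ → ℕ → ℕ → ℂ := fun t θ c d => fun g i =>
      A t θ (g % m) (i % n) * ωr ^ (c * (g / m)) * ωs ^ (d * (i / n))
    ∀ (t t' : Fin α) (c c' d d' : ℕ), c < r → c' < r → d < s → d' < s →
      ∀ (τ1 τ2 : ℤ), |τ1| < m → |τ2| < n →
        ∑ θ : Fin α, corr2 (r * m) (s * n) (Ω t θ c d) (Ω t' θ c' d') τ1 τ2 =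
          if τ1 = 0 ∧ τ2 = 0 ∧ t = t' ∧ c = c' ∧ d = d'
          then ((α : ℂ) * m * n * r * s) else 0 := by
  intro ωr ωs Ω t t' c c' d d' hc hc' hd hd' τ1 τ2 hτ1 hτ2
  have hΩ : ∀ (θ : Fin α),
      corr2 (r * m) (s * n) (Ω t θ c d) (Ω t' θ c' d') τ1 τ2 =
      ∑ ε1 ∈ ({-1, 0, 1} : Finset ℤ), ∑ ε2 ∈ ({-1, 0, 1} : Finset ℤ),
        ((∑ γ' ∈ Finset.range r, if 0 ≤ (γ' : ℤ) + ε1 ∧ (γ' : ℤ) + ε1 < r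
            then (ωr ^ c) ^ γ' * (starRingEnd ℂ (ωr ^ c')) ^ ((γ' : ℤ) + ε1).toNat else 0) *
         (∑ μ' ∈ Finset.range s, if 0 ≤ (μ' : ℤ) + ε2 ∧ (μ' : ℤ) + ε2 < s
            then (ωs ^ d) ^ μ' * (starRingEnd ℂ (ωs ^ d')) ^ ((μ' : ℤ) + ε2).toNat else 0)) *
        corr2 m n (A t θ) (A t' θ) (τ1 - ε1 * m) (τ2 - ε2 * n) := by
    intro θ
    have e1 : Ω t θ c d = fun g i =>
        A t θ (g % m) (i % n) * (ωr ^ c) ^ (g / m) * (ωs ^ d) ^ (i / n) := by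
      funext g i
      simp only [Ω, pow_mul]
    have e2 : Ω t' θ c' d' = fun g i =>
        A t' θ (g % m) (i % n) * (ωr ^ c') ^ (g / m) * (ωs ^ d') ^ (i / n) := by
      funext g i
      simp only [Ω, pow_mul]
    rw [e1, e2]
    exact corr2_decomp m n r s hm hn (A t θ) (A t' θ) (ωr ^ c) (ωr ^ c') (ωs ^ d) (ωs ^ d')
      τ1 τ2 hτ1 hτ2
  rw [Finset.sum_congr rfl fun θ _ => hΩ θ]
  rw [sum_rotate3]
  simp only [← Finset.mul_sum]
  have hS : ∀ ε1 ∈ ({-1, 0, 1} : Finset ℤ), ∀ ε2 ∈ ({-1, 0, 1} : Finset ℤ),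
      (∑ θ : Fin α, corr2 m n (A t θ) (A t' θ) (τ1 - ε1 * m) (τ2 - ε2 * n)) =
      if ε1 = 0 ∧ ε2 = 0 ∧ (τ1 = 0 ∧ τ2 = 0 ∧ t = t') then (α : ℂ) * m * n else 0 := by
    intro ε1 hε1 ε2 hε2
    simp only [Finset.mem_insert, Finset.mem_singleton] at hε1 hε2
    have hτ1' := abs_lt.mp hτ1
    have hτ2' := abs_lt.mp hτ2
    by_cases hb1 : |τ1 - ε1 * m| < m
    · by_cases hb2 : |τ2 - ε2 * n| < n
      · rw [hCCC t t' _ _ hb1 hb2]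
        have i1 : τ1 - ε1 * m = 0 ↔ ε1 = 0 ∧ τ1 = 0 := by
          rcases hε1 with rfl | rfl | rfl <;> constructor <;> intro h <;>
            first
              | omega
              | (exfalso; omega)
        have i2 : τ2 - ε2 * n = 0 ↔ ε2 = 0 ∧ τ2 = 0 := by
          rcases hε2 with rfl | rfl | rfl <;> constructor <;> intro h <;>
            first
              | omega
              | (exfalso; omega)
        by_cases hK : τ1 - ε1 * ↑m = 0 ∧ τ2 - ε2 * ↑n = 0 ∧ t = t'
        · obtain ⟨k1, k2, k3⟩ := hK
          rw [if_pos ⟨k1, k2, k3⟩,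
            if_pos ⟨(i1.mp k1).1, (i2.mp k2).1, (i1.mp k1).2, (i2.mp k2).2, k3⟩]
        · rw [if_neg hK, if_neg]
          rintro ⟨he1, he2, hk1, hk2, hk3⟩
          exact hK ⟨i1.mpr ⟨he1, hk1⟩, i2.mpr ⟨he2, hk2⟩, hk3⟩
      · push_neg at hb2
        rw [if_neg]
        · exact Finset.sum_eq_zero fun θ _ => corr2_zero_of_big m n _ _ _ _ (Or.inr hb2)
        · rintro ⟨he1, he2, hk1, hk2, hk3⟩
          subst he2; subst hk2
          simp only [zero_mul, sub_zero, abs_zero] at hb2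
          omega
    · push_neg at hb1
      rw [if_neg]
      · exact Finset.sum_eq_zero fun θ _ => corr2_zero_of_big m n _ _ _ _ (Or.inl hb1)
      · rintro ⟨he1, he2, hk1, hk2, hk3⟩
        subst he1; subst hk1
        simp only [zero_mul, sub_zero, abs_zero] at hb1
        omega
  rw [Finset.sum_congr rfl fun ε1 hε1 => Finset.sum_congr rfl fun ε2 hε2 => by
    rw [hS ε1 hε1 ε2 hε2]]
  rw [Finset.sum_eq_single (0 : ℤ)]
  rotate_left
  · intro b hb hb0
    apply Finset.sum_eq_zero
    intro ε2 hε2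
    rw [if_neg (by rintro ⟨h1, _⟩; exact hb0 h1), mul_zero]
  · intro h0
    exact absurd (by decide : (0:ℤ) ∈ ({-1,0,1} : Finset ℤ)) h0
  rw [Finset.sum_eq_single (0 : ℤ)]
  rotate_left
  · intro b hb hb0
    rw [if_neg (by rintro ⟨_, h2, _⟩; exact hb0 h2), mul_zero]
  · intro h0
    exact absurd (by decide : (0:ℤ) ∈ ({-1,0,1} : Finset ℤ)) h0
  have hG0 : (∑ γ' ∈ Finset.range r, if 0 ≤ (γ' : ℤ) + 0 ∧ (γ' : ℤ) + 0 < r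
      then (ωr ^ c) ^ γ' * (starRingEnd ℂ (ωr ^ c')) ^ ((γ' : ℤ) + 0).toNat else 0)
      = if c = c' then (r : ℂ) else 0 := by
    rw [← geom_lemma r hr.ne_zero c c' hc hc']
    apply Finset.sum_congr rfl
    intro γ' hγ'
    simp only [Finset.mem_range] at hγ'
    rw [if_pos ⟨by positivity, by push_cast; omega⟩]
    have : ((γ' : ℤ) + 0).toNat = γ' := by omega
    rw [this, ← pow_mul, ← map_pow, ← pow_mul]
  have hH0 : (∑ μ' ∈ Finset.range s, if 0 ≤ (μ' : ℤ) + 0 ∧ (μ' : ℤ) + 0 < s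
      then (ωs ^ d) ^ μ' * (starRingEnd ℂ (ωs ^ d')) ^ ((μ' : ℤ) + 0).toNat else 0)
      = if d = d' then (s : ℂ) else 0 := by
    rw [← geom_lemma s hs.ne_zero d d' hd hd']
    apply Finset.sum_congr rfl
    intro μ' hμ'
    simp only [Finset.mem_range] at hμ'
    rw [if_pos ⟨by positivity, by push_cast; omega⟩]
    have : ((μ' : ℤ) + 0).toNat = μ' := by omega
    rw [this, ← pow_mul, ← map_pow, ← pow_mul]
  rw [hG0, hH0]
  simp only [eq_self_iff_true, true_and]
  split_ifs <;> try (push_cast; ring)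
  all_goals exfalso
  all_goals clear hΩ hS hG0 hH0 hCCC
  all_goals tauto
end

section
/- Let u, u' be sequences of length m concatenated r times with phase rotations: U(γ + γ'·m) = u(γ)·ω_r^{cγ'}, U'(γ + γ'·m) = u(γ)·ω_r^{c'γ'}, for 0 ≤ γ < m, 0 ≤ γ' < r, with r prime and c ≠ c' in Z/r. Then the 1D aperiodic cross-correlation C(U, U')(τ) for 0 ≤ τ < m satisfies C(U,U')(τ) = C(u,u)(τ)·D + C(u,u)(τ − m)·D', where D = ∑_{σ=0}^{r−1} ω_r^{(c−c')σ} = 0 and D' = ∑_{σ=0}^{r−2} ω_r^{cσ − c'(σ+1)}; consequently if additionally C(u,u)(τ−m) = 0 for 0 < τ < m, then C(U,U')(τ) = 0 for all 0 ≤ τ < m. -/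
/-!
Write the shifted index `γ + τ` of `γ < m` as `q * m + s` with `s < m`. Then the index `σ * m + γ`
of a sequence `g ↦ u (g % m) * a (g / m)` is moved to `(σ + q) * m + s`, so the correlation of two
such sequences splits, for each `γ`, into `u γ * conj (v s)` times the correlation of the block
weights `a`, `b` at shift `q`. For `τ < m` only `q = 0` and `q = 1` occur; these give `D` and `D'`,
and `D` is the full geometric sum of the nontrivial `r`-th root of unity `ω ^ (c - c')`, hence `0`.
-/

open Complex Finset

open scoped ComplexConjugate

/-- 1D aperiodic cross-correlation at an integer shift `τ`. -/
noncomputable def corr1 (l : ℕ) (a b : ℕ → ℂ) (τ : ℤ) : ℂ :=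
  ∑ i ∈ Finset.range l,
    if 0 ≤ (i : ℤ) + τ ∧ (i : ℤ) + τ < l
    then a i * starRingEnd ℂ (b ((i : ℤ) + τ).toNat)
    else 0

theorem Finset.sum_range_mul_eq_sum_sum {M : Type*} [AddCommMonoid M] (f : ℕ → M) (r m : ℕ) :
    ∑ i ∈ range (r * m), f i = ∑ σ ∈ range r, ∑ γ ∈ range m, f (σ * m + γ) := by
  induction r with
  | zero => simp
  | succ r ih => rw [add_mul, one_mul, sum_range_add, ih, sum_range_succ]

section Correlation

variable (a b : ℕ → ℂ)

theorem corr1_natCast (l k : ℕ) :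
    corr1 l a b k = ∑ i ∈ range l, if i + k < l then a i * conj (b (i + k)) else 0 := by
  refine sum_congr rfl fun i _ => ?_
  have htoNat : ((i : ℤ) + k).toNat = i + k := by omega
  simp only [htoNat]
  congr 1
  apply propext
  omega

theorem corr1_natCast_eq_sum_range (l k : ℕ) :
    corr1 l a b k = ∑ i ∈ range (l - k), a i * conj (b (i + k)) := by
  rw [corr1_natCast, ← sum_filter]
  congr 1
  ext i
  simp only [mem_filter, mem_range]
  omega

theorem corr1_natCast_sub_of_le {l k : ℕ} (hk : k ≤ l) :
    corr1 l a b ((k : ℤ) - l) =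
      ∑ i ∈ range l, if l ≤ i + k then a i * conj (b (i + k - l)) else 0 := by
  refine sum_congr rfl fun i hi => ?_
  rw [mem_range] at hi
  have htoNat : ((i : ℤ) + (k - l)).toNat = i + k - l := by omega
  simp only [htoNat]
  congr 1
  apply propext
  omega

theorem corr1_eq_zero_of_le_neg {l : ℕ} {τ : ℤ} (hτ : τ ≤ -l) : corr1 l a b τ = 0 :=
  sum_eq_zero fun i hi => if_neg (by rw [mem_range] at hi; omega)

end Correlation

theorem IsPrimitiveRoot.sum_range_zpow_mul_eq_zero {K : Type*} [Field K] {ω : K} {r : ℕ}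
    (hω : IsPrimitiveRoot ω r) {k : ℤ} (hk : ¬ (r : ℤ) ∣ k) :
    ∑ σ ∈ range r, ω ^ (k * σ) = 0 := by
  have hne : ω ^ k ≠ 1 := fun h => hk ((hω.zpow_eq_one_iff_dvd k).1 h)
  have hpow : (ω ^ k) ^ r = 1 := by
    rw [← zpow_natCast, ← zpow_mul, mul_comm, zpow_mul, hω.zpow_eq_one, one_zpow]
  simp only [zpow_mul, zpow_natCast]
  rw [geom_sum_eq hne, hpow, sub_self, zero_div]

theorem IsPrimitiveRoot.conj_zpow {ζ : ℂ} {n : ℕ} (h : IsPrimitiveRoot ζ n) (hn : n ≠ 0) (k : ℤ) :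
    conj (ζ ^ k) = ζ ^ (-k) := by
  rw [map_zpow₀, ← inv_eq_conj (h.norm'_eq_one hn), inv_zpow, zpow_neg]

def kronSeq {R : Type*} [Mul R] (m : ℕ) (u a : ℕ → R) (g : ℕ) : R := u (g % m) * a (g / m)

theorem kronSeq_mul_add {R : Type*} [Mul R] {m γ : ℕ} (u a : ℕ → R) (σ : ℕ) (hγ : γ < m) :
    kronSeq m u a (σ * m + γ) = u γ * a σ := by
  rw [kronSeq, Nat.mul_add_mod_of_lt hγ, add_comm, Nat.add_mul_div_right _ _ (by omega),
    Nat.div_eq_of_lt hγ, zero_add]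

theorem corr1_kronSeq (u v a b : ℕ → ℂ) (r m τ : ℕ) :
    corr1 (r * m) (kronSeq m u a) (kronSeq m v b) τ =
      ∑ γ ∈ range m, u γ * conj (v ((γ + τ) % m)) * corr1 r a b ((γ + τ) / m : ℕ) := by
  rw [corr1_natCast, sum_range_mul_eq_sum_sum, sum_comm]
  refine sum_congr rfl fun γ hγ => ?_
  rw [mem_range] at hγ
  rw [corr1_natCast, mul_sum]
  refine sum_congr rfl fun σ _ => ?_
  have hs : (γ + τ) % m < m := Nat.mod_lt _ (by omega)
  have hsplit : σ * m + γ + τ = (σ + (γ + τ) / m) * m + (γ + τ) % m := by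
    have := Nat.div_add_mod (γ + τ) m
    rw [add_mul]
    linarith
  have hlt : (σ + (γ + τ) / m) * m + (γ + τ) % m < r * m ↔ σ + (γ + τ) / m < r := by
    rw [← Nat.div_lt_iff_lt_mul (by omega), add_comm, Nat.add_mul_div_right _ _ (by omega),
      Nat.div_eq_of_lt hs, zero_add]
  rw [hsplit]
  simp only [hlt, kronSeq_mul_add _ _ _ hγ, kronSeq_mul_add _ _ _ hs]
  split_ifs
  · simp only [map_mul]; ring
  · rw [mul_zero]

theorem corr1_kronSeq_of_lt (u v a b : ℕ → ℂ) (r : ℕ) {m τ : ℕ} (hτ : τ < m) :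
    corr1 (r * m) (kronSeq m u a) (kronSeq m v b) τ =
      corr1 m u v τ * corr1 r a b 0 + corr1 m u v ((τ : ℤ) - m) * corr1 r a b 1 := by
  rw [corr1_kronSeq, corr1_natCast u v m τ, corr1_natCast_sub_of_le u v hτ.le, sum_mul, sum_mul,
    ← sum_add_distrib]
  refine sum_congr rfl fun γ hγ => ?_
  rw [mem_range] at hγ
  by_cases h : γ + τ < m
  · rw [Nat.mod_eq_of_lt h, Nat.div_eq_of_lt h, if_pos h, if_neg (by omega)]
    simp
  · have hq : (γ + τ) / m = 1 := by
      rw [Nat.div_eq_iff] <;> omega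
    have hs : (γ + τ) % m = γ + τ - m := by
      rw [Nat.mod_eq_sub_mod (by omega), Nat.mod_eq_of_lt (by omega)]
    rw [hq, hs, if_neg h, if_pos (by omega)]
    simp

theorem stmt11_general (m r : ℕ)
    (u : ℕ → ℂ) (c c' : ℕ) (hc : c < r) (hc' : c' < r) (hcc' : c ≠ c') :
    let ω : ℂ := Complex.exp (2 * Real.pi * Complex.I / r)
    let U : ℕ → ℂ := fun g => u (g % m) * ω ^ ((c : ℤ) * (g / m))
    let U' : ℕ → ℂ := fun g => u (g % m) * ω ^ ((c' : ℤ) * (g / m))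
    let D : ℂ := ∑ σ ∈ Finset.range r, ω ^ (((c : ℤ) - (c' : ℤ)) * σ)
    let D' : ℂ := ∑ σ ∈ Finset.range (r - 1), ω ^ ((c : ℤ) * σ - (c' : ℤ) * (σ + 1))
    (∀ τ : ℕ, τ < m →
      corr1 (r * m) U U' τ = corr1 m u u τ * D + corr1 m u u ((τ : ℤ) - m) * D') ∧
    D = 0 ∧
    ((∀ τ : ℕ, 0 < τ → τ < m → corr1 m u u ((τ : ℤ) - m) = 0) →
      ∀ τ : ℕ, τ < m → corr1 (r * m) U U' τ = 0) := by
  intro ω U U' D D'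
  have hω : IsPrimitiveRoot ω r := Complex.isPrimitiveRoot_exp r (by omega)
  set a : ℕ → ℂ := fun σ => ω ^ ((c : ℤ) * σ)
  set b : ℕ → ℂ := fun σ => ω ^ ((c' : ℤ) * σ)
  have hU : U = kronSeq m u a := by ext g; simp [U, a, kronSeq]
  have hU' : U' = kronSeq m u b := by ext g; simp [U', b, kronSeq]
  have hab (σ σ' : ℕ) : a σ * conj (b σ') = ω ^ ((c : ℤ) * σ - c' * σ') := by
    rw [hω.conj_zpow (by omega), ← zpow_add₀ (hω.ne_zero (by omega)), sub_eq_add_neg]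
  have hD0 : corr1 r a b 0 = D := by
    rw [← Nat.cast_zero (R := ℤ), corr1_natCast_eq_sum_range]
    exact sum_congr rfl fun σ _ => by rw [hab, add_zero, sub_mul]
  have hD1 : corr1 r a b 1 = D' := by
    rw [← Nat.cast_one (R := ℤ), corr1_natCast_eq_sum_range]
    exact sum_congr rfl fun σ _ => by rw [hab]; push_cast; rfl
  have hkey (τ : ℕ) (hτ : τ < m) :
      corr1 (r * m) U U' τ = corr1 m u u τ * D + corr1 m u u ((τ : ℤ) - m) * D' := by
    rw [hU, hU', corr1_kronSeq_of_lt u u a b r hτ, hD0, hD1]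
  have hD : D = 0 := by
    refine hω.sum_range_zpow_mul_eq_zero fun hdvd => hcc' ?_
    have := Int.eq_zero_of_abs_lt_dvd hdvd (by rw [abs_lt]; omega)
    omega
  refine ⟨hkey, hD, fun hneg τ hτ => ?_⟩
  rw [hkey τ hτ, hD, mul_zero, zero_add]
  rcases Nat.eq_zero_or_pos τ with rfl | hτ0
  · rw [corr1_eq_zero_of_le_neg u u (by simp), zero_mul]
  · rw [hneg τ hτ0 hτ, zero_mul]

theorem stmt11 (m r : ℕ) (hm : 0 < m) (hr : r.Prime)
    (u : ℕ → ℂ) (c c' : ℕ) (hc : c < r) (hc' : c' < r) (hcc' : c ≠ c') :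
    let ω : ℂ := Complex.exp (2 * Real.pi * Complex.I / r)
    let U : ℕ → ℂ := fun g => u (g % m) * ω ^ ((c : ℤ) * (g / m))
    let U' : ℕ → ℂ := fun g => u (g % m) * ω ^ ((c' : ℤ) * (g / m))
    let D : ℂ := ∑ σ ∈ Finset.range r, ω ^ (((c : ℤ) - (c' : ℤ)) * σ)
    let D' : ℂ := ∑ σ ∈ Finset.range (r - 1), ω ^ ((c : ℤ) * σ - (c' : ℤ) * (σ + 1))
    (∀ τ : ℕ, τ < m →
      corr1 (r * m) U U' τ = corr1 m u u τ * D + corr1 m u u ((τ : ℤ) - m) * D') ∧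
    D = 0 ∧
    ((∀ τ : ℕ, 0 < τ → τ < m → corr1 m u u ((τ : ℤ) - m) = 0) →
      ∀ τ : ℕ, τ < m → corr1 (r * m) U U' τ = 0) :=
  stmt11_general m r u c c' hc hc' hcc'
end

section
/- Let p be prime, m ≥ 2, π a permutation of {1,…,m}, and define f(γ) = ∑_{e=1}^{m−1} γ_{π(e)}γ_{π(e+1)} (mod p) for γ ∈ (Z/p)^m. For r, x ∈ Z/p, set a^r_x(γ) = f(γ) + r·γ_{π(1)} + x·γ_{π(m)}. Then for fixed x ≠ x' in Z/p, and any r, r' ∈ Z/p, ∑_{γ ∈ (Z/p)^m} ω_p^{a^r_x(γ) − a^{r'}_{x'}(γ)} = 0. -/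
open Complex Finset

/-! The quadratic part `f` cancels in `a r x - a r' x'`, leaving the linear form
`γ ↦ (r - r') γ_{π(1)} + (x - x') γ_{π(m)}`, which is nonzero because `π(1) ≠ π(m)` and
`x ≠ x'`. The exponential sum is that of the standard (primitive) additive character of `ZMod p`
composed with this form, and such a sum over the whole space vanishes. -/

theorem AddChar.sum_apply_linearMap_eq_zero {R M R' : Type*} [CommRing R] [AddCommGroup M]
    [Module R M] [Fintype M] [CommRing R'] [IsDomain R'] {ψ : AddChar R R'}
    (hψ : ψ.IsPrimitive) {ℓ : M →ₗ[R] R} (hℓ : ℓ ≠ 0) : ∑ v, ψ (ℓ v) = 0 := by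
  obtain ⟨v₀, hv₀⟩ := DFunLike.ne_iff.1 hℓ
  obtain ⟨t, ht⟩ := AddChar.ne_one_iff.1 (hψ hv₀)
  have hψℓ : ψ.compAddMonoidHom ℓ.toAddMonoidHom ≠ 1 :=
    AddChar.ne_one_iff.2 ⟨t • v₀, by simpa [mul_comm] using ht⟩
  exact AddChar.sum_eq_zero_of_ne_one hψℓ

theorem LinearMap.smul_proj_add_smul_proj_ne_zero {ι R : Type*} [CommRing R] [DecidableEq ι]
    {i j : ι} (hij : i ≠ j) (d : R) {c : R} (hc : c ≠ 0) :
    d • LinearMap.proj (R := R) (φ := fun _ : ι ↦ R) i + c • LinearMap.proj j ≠ 0 := by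
  refine DFunLike.ne_iff.2 ⟨Pi.single j 1, ?_⟩
  simpa [Pi.single_eq_of_ne hij] using hc

theorem ZMod.exp_pow_val_eq_stdAddChar {N : ℕ} [NeZero N] (u : ZMod N) :
    Complex.exp (2 * Real.pi * Complex.I / N) ^ u.val = ZMod.stdAddChar u := by
  rw [stdAddChar_apply, toCircle_apply, ← Complex.exp_nat_mul]
  ring_nf

theorem stmt14 (p : ℕ) (hp : p.Prime) (m : ℕ) (hm : 2 ≤ m)
    (π : Equiv.Perm (Fin m)) (r r' x x' : ZMod p) (hxx' : x ≠ x') :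
    letI : NeZero p := ⟨hp.ne_zero⟩
    let ω : ℂ := Complex.exp (2 * Real.pi * Complex.I / p)
    let f : (Fin m → ZMod p) → ZMod p := fun γ =>
      ∑ e : Fin (m - 1),
        γ (π (Fin.castLE (Nat.sub_le m 1) e)) * γ (π ⟨e.val + 1, by omega⟩)
    let a : ZMod p → ZMod p → (Fin m → ZMod p) → ZMod p := fun t y γ =>
      f γ + t * γ (π ⟨0, by omega⟩) + y * γ (π ⟨m - 1, by omega⟩)
    ∑ γ : Fin m → ZMod p, ω ^ ((a r x γ - a r' x' γ).val) = 0 := by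
  intro ω f a
  have : NeZero p := ⟨hp.ne_zero⟩
  set i := π ⟨0, by omega⟩
  set j := π ⟨m - 1, by omega⟩
  have hij : i ≠ j := π.injective.ne (by simp only [ne_eq, Fin.mk.injEq]; omega)
  let ℓ := (r - r') • LinearMap.proj (R := ZMod p) (φ := fun _ : Fin m ↦ ZMod p) i +
    (x - x') • LinearMap.proj j
  have hphase : ∀ γ, a r x γ - a r' x' γ = ℓ γ := by
    intro γ
    simp only [a, ℓ, LinearMap.add_apply, LinearMap.smul_apply, LinearMap.coe_proj,
      Function.eval, smul_eq_mul]
    ring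
  simp only [hphase, ω, ZMod.exp_pow_val_eq_stdAddChar]
  exact AddChar.sum_apply_linearMap_eq_zero (ZMod.isPrimitive_stdAddChar p)
    (LinearMap.smul_proj_add_smul_proj_ne_zero hij _ (sub_ne_zero.2 hxx'))
end
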